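/- Let σ and σ' be 1-Σ₁ sentences with σ' well-behaved. (a) If ℕ ⊨ σ ≤ σ' then R₀ ⊢ ¬(σ' < σ). (b) If ℕ ⊨ σ < σ' then R₀ ⊢ ¬(σ' ≤ σ). -/

import Mathlib

open FirstOrder FirstOrder.Language

/-- Function symbols of the arithmetic language `L_a = {0, S, +, ×, ≤}`. -/
inductive AFunc : ℕ → Type
  | zero : AFunc 0
  | succ : AFunc 1
  | add : AFunc 2
  | mul : AFunc 2

/-- Relation symbols of `L_a`: the single binary relation `≤`. -/
inductive ARel : ℕ → Type
  | le : ARel 2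

/-- The first-order language of arithmetic `L_a = {0, S, +, ×, ≤}`. -/
def La : Language := ⟨AFunc, ARel⟩

/-- The standard model ℕ as an `La`-structure. -/
instance : La.Structure ℕ where
  funMap := fun {n} f => match f with
    | .zero => fun _ => 0
    | .succ => fun v => v 0 + 1
    | .add => fun v => v 0 + v 1
    | .mul => fun v => v 0 * v 1
  RelMap := fun {n} r => match r with
    | .le => fun v => v 0 ≤ v 1

/-- The term `0`. -/
def zeroT {β : Type} : La.Term β := Term.func AFunc.zero ![]
/-- The term `S t`. -/
def succT {β : Type} (t : La.Term β) : La.Term β := Term.func AFunc.succ ![t]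
/-- The term `t + u`. -/
def addT {β : Type} (t u : La.Term β) : La.Term β := Term.func AFunc.add ![t, u]
/-- The term `t × u`. -/
def mulT {β : Type} (t u : La.Term β) : La.Term β := Term.func AFunc.mul ![t, u]

/-- The numeral `S…S0`. -/
def num {β : Type} : ℕ → La.Term β
  | 0 => zeroT
  | n + 1 => succT (num n)

/-- The atomic formula `t ≤ u`. -/
def leF {α : Type} {n : ℕ} (t u : La.Term (α ⊕ Fin n)) : La.BoundedFormula α n :=
  Relations.boundedFormula ARel.le ![t, u]

/-- The formula `t < u`, i.e. `t ≤ u ∧ t ≠ u`. -/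
def ltF {α : Type} {n : ℕ} (t u : La.Term (α ⊕ Fin n)) : La.BoundedFormula α n :=
  leF t u ⊓ ∼(t =' u)

/-- Lift a term of context `n` to context `n+1`. -/
def liftT {α : Type} {n : ℕ} (t : La.Term (α ⊕ Fin n)) : La.Term (α ⊕ Fin (n + 1)) :=
  t.relabel (Sum.map id Fin.castSucc)

/-- The de Bruijn variable `i` as a term. -/
def vr {α : Type} {n : ℕ} (i : Fin n) : La.Term (α ⊕ Fin n) := Term.var (Sum.inr i)

/-- The disjunction `⋁_{i ≤ n} x = ī` (with `x` the de Bruijn variable 0). -/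
def disjEq : ℕ → La.BoundedFormula Empty 1
  | 0 => (vr 0 : La.Term _) =' num 0
  | n + 1 => disjEq n ⊔ ((vr 0 : La.Term _) =' num (n + 1))

/-- Axiom R1: `m̄ + n̄ = (m+n)̄`. -/
def axR1 (m n : ℕ) : La.Sentence := addT (num m) (num n) =' num (m + n)
/-- Axiom R2: `m̄ × n̄ = (m·n)̄`. -/
def axR2 (m n : ℕ) : La.Sentence := mulT (num m) (num n) =' num (m * n)
/-- Axiom R3: `m̄ ≠ n̄` (for `m ≠ n`). -/
def axR3 (m n : ℕ) : La.Sentence := ∼((num m : La.Term _) =' num n)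
/-- Axiom R4: `∀x (x ≤ n̄ → ⋁_{i ≤ n} x = ī)`. -/
def axR4 (n : ℕ) : La.Sentence := ∀' (leF (vr 0) (num n) ⟹ disjEq n)
/-- Axiom R5': `m̄ ≤ n̄` (for `m ≤ n`). -/
def axR5' (m n : ℕ) : La.Sentence := leF (num m : La.Term (Empty ⊕ Fin 0)) (num n)

/-- The theory `R₀`, axiomatized by R1–R4 and R5'. -/
def R0 : La.Theory :=
  {φ | ∃ m n : ℕ, φ = axR1 m n} ∪
  {φ | ∃ m n : ℕ, φ = axR2 m n} ∪
  {φ | ∃ m n : ℕ, m ≠ n ∧ φ = axR3 m n} ∪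
  {φ | ∃ n : ℕ, φ = axR4 n} ∪
  {φ | ∃ m n : ℕ, m ≤ n ∧ φ = axR5' m n}

/-- Δ₀-formulas of `L_a`: built from atomic formulas by Boolean connectives and
bounded quantifiers `∀ y ≤ t`, `∃ y ≤ t`. -/
inductive IsDelta0 : ∀ {α : Type} {n : ℕ}, La.BoundedFormula α n → Prop
  | falsum {α : Type} {n : ℕ} : IsDelta0 (⊥ : La.BoundedFormula α n)
  | equal {α : Type} {n : ℕ} (t u : La.Term (α ⊕ Fin n)) : IsDelta0 (t =' u)
  | le {α : Type} {n : ℕ} (t u : La.Term (α ⊕ Fin n)) : IsDelta0 (leF t u)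
  | imp {α : Type} {n : ℕ} {φ ψ : La.BoundedFormula α n} :
      IsDelta0 φ → IsDelta0 ψ → IsDelta0 (φ ⟹ ψ)
  | ball {α : Type} {n : ℕ} (t : La.Term (α ⊕ Fin n)) {φ : La.BoundedFormula α (n + 1)} :
      IsDelta0 φ →
      IsDelta0 (∀' (leF (Term.var (Sum.inr (Fin.last n))) (liftT t) ⟹ φ))
  | bex {α : Type} {n : ℕ} (t : La.Term (α ⊕ Fin n)) {φ : La.BoundedFormula α (n + 1)} :
      IsDelta0 φ →
      IsDelta0 (∃' (leF (Term.var (Sum.inr (Fin.last n))) (liftT t) ⊓ φ))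

/-- A Σ₁-formula: an existential block (possibly empty) in front of a Δ₀-formula. -/
def IsSigma1 {α : Type} (φ : La.Formula α) : Prop :=
  ∃ (m : ℕ) (δ : La.BoundedFormula α m), IsDelta0 δ ∧ φ = δ.exs

/-- Pure Δ₀-formulas: Δ₀-formulas in which the atomic subformulas are only
`x₀ = x₁`, `0 = x₀`, `S x₀ = x₁`, `x₀ + x₁ = x₂`, `x₀ × x₁ = x₂`, and `x₀ ≤ x₁`,
with all arguments variables, and the bounds of bounded quantifiers are variables. -/
inductive IsPureDelta0 : ∀ {α : Type} {n : ℕ}, La.BoundedFormula α n → Prop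
  | eq {α : Type} {n : ℕ} (w₁ w₂ : α ⊕ Fin n) :
      IsPureDelta0 ((Term.var w₁ : La.Term _) =' Term.var w₂)
  | zeroEq {α : Type} {n : ℕ} (w : α ⊕ Fin n) :
      IsPureDelta0 ((zeroT : La.Term _) =' Term.var w)
  | succEq {α : Type} {n : ℕ} (w₁ w₂ : α ⊕ Fin n) :
      IsPureDelta0 (succT (Term.var w₁) =' (Term.var w₂ : La.Term _))
  | addEq {α : Type} {n : ℕ} (w₁ w₂ w₃ : α ⊕ Fin n) :
      IsPureDelta0 (addT (Term.var w₁) (Term.var w₂) =' (Term.var w₃ : La.Term _))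
  | mulEq {α : Type} {n : ℕ} (w₁ w₂ w₃ : α ⊕ Fin n) :
      IsPureDelta0 (mulT (Term.var w₁) (Term.var w₂) =' (Term.var w₃ : La.Term _))
  | le {α : Type} {n : ℕ} (w₁ w₂ : α ⊕ Fin n) :
      IsPureDelta0 (leF (Term.var w₁) (Term.var w₂))
  | falsum {α : Type} {n : ℕ} : IsPureDelta0 (⊥ : La.BoundedFormula α n)
  | imp {α : Type} {n : ℕ} {φ ψ : La.BoundedFormula α n} :
      IsPureDelta0 φ → IsPureDelta0 ψ → IsPureDelta0 (φ ⟹ ψ)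
  | ball {α : Type} {n : ℕ} (w : α ⊕ Fin n) {φ : La.BoundedFormula α (n + 1)} :
      IsPureDelta0 φ →
      IsPureDelta0 (∀' (leF (Term.var (Sum.inr (Fin.last n))) (Term.var (Sum.map id Fin.castSucc w)) ⟹ φ))
  | bex {α : Type} {n : ℕ} (w : α ⊕ Fin n) {φ : La.BoundedFormula α (n + 1)} :
      IsPureDelta0 φ →
      IsPureDelta0 (∃' (leF (Term.var (Sum.inr (Fin.last n))) (Term.var (Sum.map id Fin.castSucc w)) ⊓ φ))

/-- A pure Σ₁-formula: an existential block (possibly empty) in front of a pure Δ₀-formula. -/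
def IsPureSigma1 {α : Type} (φ : La.Formula α) : Prop :=
  ∃ (m : ℕ) (δ : La.BoundedFormula α m), IsPureDelta0 δ ∧ φ = δ.exs

/-- A pure 1-Σ₁ sentence: `∃x σ₀(x)` with `σ₀` pure Δ₀ and a single existential quantifier. -/
def IsPure1Sigma1 (σ : La.Sentence) : Prop :=
  ∃ δ : La.BoundedFormula Empty 1, IsPureDelta0 δ ∧ σ = ∃' δ

/-- `wb(t)`: `t` is well-behaved, i.e. `0 ≤ t ∧ ∀y < t, S y ≤ t`. -/
def wbF {n : ℕ} (t : La.Term (Empty ⊕ Fin n)) : La.BoundedFormula Empty n :=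
  leF zeroT t ⊓
    ∀' (ltF (Term.var (Sum.inr (Fin.last n))) (liftT t) ⟹
      leF (succT (Term.var (Sum.inr (Fin.last n)))) (liftT t))

/-- Witness comparison `(∃x φ₀) ≤ (∃y ψ₀)`: `∃x (φ₀(x) ∧ ∀y < x ¬ψ₀(y))`. -/
def wcLe (φ₀ ψ₀ : La.BoundedFormula Empty 1) : La.Sentence :=
  ∃' (φ₀ ⊓ ∀' (ltF (vr 1) (vr 0) ⟹ ∼(ψ₀.liftAt 1 0)))

/-- Witness comparison `(∃x φ₀) < (∃y ψ₀)`: `∃x (φ₀(x) ∧ ∀y ≤ x ¬ψ₀(y))`. -/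
def wcLt (φ₀ ψ₀ : La.BoundedFormula Empty 1) : La.Sentence :=
  ∃' (φ₀ ⊓ ∀' (leF (vr 1) (vr 0) ⟹ ∼(ψ₀.liftAt 1 0)))

section Helpers

open FirstOrder.Language.BoundedFormula

variable {M : Type*} [La.Structure M]

/-- The interpretation of the numeral `n` in `M`. -/
def numM (M : Type*) [La.Structure M] : ℕ → M
  | 0 => Structure.funMap (L := La) AFunc.zero ![]
  | n + 1 => Structure.funMap (L := La) AFunc.succ ![numM M n]

lemma realize_num {β : Type} (v : β → M) (k : ℕ) :
    Term.realize v (num k) = numM M k := by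
  induction k with
  | zero =>
      simp only [num, zeroT, Term.realize, numM]
      congr 1
      funext i; exact i.elim0
  | succ n ih =>
      simp only [num, succT, Term.realize, numM]
      congr 1
      funext i; fin_cases i; simpa using ih

/-- The interpretation of `≤` in `M`. -/
def leM (x y : M) : Prop := Structure.RelMap (L := La) ARel.le ![x, y]

lemma realize_leF {α : Type} {n : ℕ} (t u : La.Term (α ⊕ Fin n)) (v : α → M)
    (xs : Fin n → M) :
    (leF t u).Realize v xs ↔
      leM (t.realize (Sum.elim v xs)) (u.realize (Sum.elim v xs)) := by
  rw [leF]
  show Structure.RelMap (L := La) ARel.le (fun i => Term.realize (Sum.elim v xs) (![t, u] i)) ↔ _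
  have e : (fun i => Term.realize (Sum.elim v xs) (![t, u] i))
      = ![Term.realize (Sum.elim v xs) t, Term.realize (Sum.elim v xs) u] := by
    funext i; fin_cases i <;> rfl
  rw [e]; rfl

end Helpers
section Helpers2

open FirstOrder.Language.BoundedFormula

variable {M : Type*} [La.Structure M] (hM : ∀ φ ∈ R0, M ⊨ φ)

lemma realize_vr {α : Type} {n : ℕ} (i : Fin n) (v : α → M) (xs : Fin n → M) :
    Term.realize (Sum.elim v xs) (vr i) = xs i := rfl

include hM

lemma numM_add (a b : ℕ) :
    Structure.funMap (L := La) AFunc.add ![numM M a, numM M b] = numM M (a + b) := by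
  have h := hM (axR1 a b) (Or.inl (Or.inl (Or.inl (Or.inl ⟨a, b, rfl⟩))))
  rw [Sentence.Realize, axR1, Formula.Realize, BoundedFormula.realize_bdEqual,
    realize_num] at h
  rw [← h]
  simp only [addT, Term.realize]
  congr 1
  funext i; fin_cases i <;> simp [realize_num]

lemma numM_mul (a b : ℕ) :
    Structure.funMap (L := La) AFunc.mul ![numM M a, numM M b] = numM M (a * b) := by
  have h := hM (axR2 a b) (Or.inl (Or.inl (Or.inl (Or.inr ⟨a, b, rfl⟩))))
  rw [Sentence.Realize, axR2, Formula.Realize, BoundedFormula.realize_bdEqual,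
    realize_num] at h
  rw [← h]
  simp only [mulT, Term.realize]
  congr 1
  funext i; fin_cases i <;> simp [realize_num]

lemma numM_inj {a b : ℕ} (h : numM M a = numM M b) : a = b := by
  by_contra hne
  have h3 := hM (axR3 a b) (Or.inl (Or.inl (Or.inr ⟨a, b, hne, rfl⟩)))
  rw [Sentence.Realize, axR3, Formula.Realize, BoundedFormula.realize_not,
    BoundedFormula.realize_bdEqual, realize_num, realize_num] at h3
  exact h3 h

lemma numM_le_of_le {a b : ℕ} (h : a ≤ b) : leM (numM M a) (numM M b) := by
  have h5 := hM (axR5' a b) (Or.inr ⟨a, b, h, rfl⟩)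
  rw [Sentence.Realize, axR5', Formula.Realize, realize_leF, realize_num, realize_num] at h5
  exact h5

lemma realize_disjEq (n : ℕ) (v : Empty → M) (xs : Fin 1 → M) :
    (disjEq n).Realize v xs ↔ ∃ i ≤ n, xs 0 = numM M i := by
  induction n with
  | zero =>
      rw [disjEq, BoundedFormula.realize_bdEqual, realize_vr, realize_num]
      constructor
      · exact fun h => ⟨0, le_refl 0, h⟩
      · rintro ⟨i, hi, h⟩; rwa [Nat.le_zero.mp hi] at h
  | succ n ih =>
      rw [disjEq, BoundedFormula.realize_sup, ih,
        BoundedFormula.realize_bdEqual, realize_vr, realize_num]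
      constructor
      · rintro (⟨i, hi, h⟩ | h)
        · exact ⟨i, hi.trans (Nat.le_succ n), h⟩
        · exact ⟨n + 1, le_refl _, h⟩
      · rintro ⟨i, hi, h⟩
        by_cases h' : i ≤ n
        · exact Or.inl ⟨i, h', h⟩
        · exact Or.inr (by rwa [show i = n + 1 by omega] at h)

lemma le_numM_cases {x : M} {n : ℕ} (h : leM x (numM M n)) : ∃ i ≤ n, x = numM M i := by
  have h4 := hM (axR4 n) (Or.inl (Or.inr ⟨n, rfl⟩))
  rw [Sentence.Realize, axR4, Formula.Realize, BoundedFormula.realize_all] at h4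
  have h4x := h4 x
  rw [BoundedFormula.realize_imp, realize_leF, realize_num, realize_disjEq hM] at h4x
  have hsn : (Fin.snoc (default : Fin 0 → M) x : Fin 1 → M) 0 = x := by
    simp [Fin.snoc]
  rw [realize_vr, hsn] at h4x
  rw [← hsn]
  exact h4x h

lemma numM_le_iff {a b : ℕ} : leM (numM M a) (numM M b) ↔ a ≤ b := by
  constructor
  · intro h
    rcases le_numM_cases hM h with ⟨i, hi, hx⟩
    rwa [numM_inj hM hx]
  · exact numM_le_of_le hM

end Helpers2
section Helpers3

open FirstOrder.Language.BoundedFormula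

variable {M : Type*} [La.Structure M] (hM : ∀ φ ∈ R0, M ⊨ φ)

include hM

lemma term_abs {α : Type} {n : ℕ} (t : La.Term (α ⊕ Fin n)) (w : α → ℕ) (v : Fin n → ℕ) :
    t.realize (Sum.elim (fun a => numM M (w a)) (fun i => numM M (v i)))
      = numM M (t.realize (Sum.elim w v)) := by
  induction t with
  | var x => cases x <;> rfl
  | func f ts ih =>
      cases f with
      | zero =>
          simp only [Term.realize, numM]
          congr 1
          funext i; exact i.elim0
      | succ =>
          simp only [Term.realize]
          have : (Term.realize (Sum.elim w v) (ts 0) + 1) = (Term.realize (Sum.elim w v) (ts 0)) + 1 := rfl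
          show _ = numM M (Structure.funMap (L := La) AFunc.succ fun i => Term.realize (Sum.elim w v) (ts i))
          have e : (Structure.funMap (L := La) AFunc.succ fun i => Term.realize (Sum.elim w v) (ts i))
              = Term.realize (Sum.elim w v) (ts 0) + 1 := rfl
          rw [e, numM]
          congr 1
          funext i; fin_cases i; simpa using ih 0
      | add =>
          show _ = numM M (Structure.funMap (L := La) AFunc.add fun i => Term.realize (Sum.elim w v) (ts i))
          have e : (Structure.funMap (L := La) AFunc.add fun i => Term.realize (Sum.elim w v) (ts i))
              = Term.realize (Sum.elim w v) (ts 0) + Term.realize (Sum.elim w v) (ts 1) := rfl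
          rw [e, ← numM_add hM]
          simp only [Term.realize]
          congr 1
          funext i; fin_cases i
          · simpa using ih 0
          · simpa using ih 1
      | mul =>
          show _ = numM M (Structure.funMap (L := La) AFunc.mul fun i => Term.realize (Sum.elim w v) (ts i))
          have e : (Structure.funMap (L := La) AFunc.mul fun i => Term.realize (Sum.elim w v) (ts i))
              = Term.realize (Sum.elim w v) (ts 0) * Term.realize (Sum.elim w v) (ts 1) := rfl
          rw [e, ← numM_mul hM]
          simp only [Term.realize]
          congr 1
          funext i; fin_cases i
          · simpa using ih 0
          · simpa using ih 1

end Helpers3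
section Helpers4

open FirstOrder.Language.BoundedFormula

variable {M : Type*} [La.Structure M] (hM : ∀ φ ∈ R0, M ⊨ φ)

lemma numM_nat (k : ℕ) : numM ℕ k = k := by
  induction k with
  | zero => rfl
  | succ n ih => show numM ℕ n + 1 = n + 1; rw [ih]

lemma leM_nat (x y : ℕ) : leM x y ↔ x ≤ y := Iff.rfl

lemma realize_liftT {N : Type*} [La.Structure N] {α : Type} {n : ℕ}
    (t : La.Term (α ⊕ Fin n)) (g : α → N) (xs : Fin n → N) (x : N) :
    Term.realize (Sum.elim g (Fin.snoc xs x)) (liftT t) = Term.realize (Sum.elim g xs) t := by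
  rw [liftT, Term.realize_relabel]
  congr 1
  funext z
  cases z with
  | inl a => rfl
  | inr i => simp [Fin.snoc_castSucc]

lemma snoc_numM {n : ℕ} (v : Fin n → ℕ) (j : ℕ) :
    (Fin.snoc (fun i : Fin n => numM M (v i)) (numM M j) : Fin (n+1) → M)
      = fun i => numM M ((Fin.snoc v j : Fin (n + 1) → ℕ) i) := by
  funext i
  induction i using Fin.lastCases with
  | last => simp
  | cast i => simp

include hM

lemma delta0_abs : ∀ {α : Type} {n : ℕ} {δ : La.BoundedFormula α n}, IsDelta0 δ →
    ∀ (w : α → ℕ) (v : Fin n → ℕ),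
    (BoundedFormula.Realize (M := M) δ (fun a => numM M (w a)) (fun i => numM M (v i)) ↔
      δ.Realize w v) := by
  intro α n δ h
  induction h with
  | falsum => intro w v; simp
  | equal t u =>
      intro w v
      rw [BoundedFormula.realize_bdEqual, BoundedFormula.realize_bdEqual]
      have e1 := term_abs hM t w v
      have e2 := term_abs hM u w v
      constructor
      · intro h; apply numM_inj hM; rw [← e1, ← e2, h]
      · intro h; rw [e1, e2, h]
  | le t u =>
      intro w v
      rw [realize_leF, realize_leF, term_abs hM, term_abs hM, numM_le_iff hM, leM_nat]
  | imp h1 h2 ih1 ih2 =>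
      intro w v
      rw [BoundedFormula.realize_imp, BoundedFormula.realize_imp, ih1, ih2]
  | @ball n t φ _h ih =>
      intro w v
      rw [BoundedFormula.realize_all, BoundedFormula.realize_all]
      constructor
      · intro H j
        rw [BoundedFormula.realize_imp, realize_leF, realize_liftT]
        intro hj
        have hjle : j ≤ Term.realize (Sum.elim w v) t := by
          simpa [Term.realize, Fin.snoc_last, leM_nat] using hj
        have HM := H (numM M j)
        rw [BoundedFormula.realize_imp, realize_leF, realize_liftT, term_abs hM] at HM
        have HM2 := HM (by simpa [Term.realize, Fin.snoc_last] using numM_le_iff hM |>.mpr hjle)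
        rw [snoc_numM (M := M), ih] at HM2
        exact HM2
      · intro H x
        rw [BoundedFormula.realize_imp, realize_leF, realize_liftT, term_abs hM]
        intro hx
        have hx' : leM x (numM M (Term.realize (Sum.elim w v) t)) := by
          simpa [Term.realize, Fin.snoc_last] using hx
        obtain ⟨i, hi, rfl⟩ := le_numM_cases hM hx'
        rw [snoc_numM (M := M), ih]
        have HN := H i
        rw [BoundedFormula.realize_imp, realize_leF, realize_liftT] at HN
        exact HN (by simpa [Term.realize, Fin.snoc_last, leM_nat] using hi)
  | @bex n t φ _h ih =>
      intro w v
      rw [BoundedFormula.realize_ex, BoundedFormula.realize_ex]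
      constructor
      · rintro ⟨x, hx⟩
        rw [BoundedFormula.realize_inf, realize_leF, realize_liftT, term_abs hM] at hx
        obtain ⟨hle, hφx⟩ := hx
        have hx' : leM x (numM M (Term.realize (Sum.elim w v) t)) := by
          simpa [Term.realize, Fin.snoc_last] using hle
        obtain ⟨i, hi, rfl⟩ := le_numM_cases hM hx'
        refine ⟨i, ?_⟩
        rw [BoundedFormula.realize_inf, realize_leF, realize_liftT]
        constructor
        · simpa [Term.realize, Fin.snoc_last, leM_nat] using hi
        · rw [snoc_numM (M := M), ih] at hφx; exact hφx
      · rintro ⟨j, hj⟩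
        rw [BoundedFormula.realize_inf, realize_leF, realize_liftT] at hj
        obtain ⟨hle, hφj⟩ := hj
        have hjle : j ≤ Term.realize (Sum.elim w v) t := by
          simpa [Term.realize, Fin.snoc_last, leM_nat] using hle
        refine ⟨numM M j, ?_⟩
        rw [BoundedFormula.realize_inf, realize_leF, realize_liftT, term_abs hM]
        constructor
        · simpa [Term.realize, Fin.snoc_last] using numM_le_iff hM |>.mpr hjle
        · rw [snoc_numM (M := M), ih]; exact hφj

end Helpers4
section Helpers5

open FirstOrder.Language.BoundedFormula

variable {M : Type*} [La.Structure M]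

lemma snoc_zero (v : Fin 0 → M) (x : M) : (Fin.snoc v x : Fin 1 → M) = ![x] := by
  funext i; fin_cases i; simp [Fin.snoc]

lemma snoc_one (a b : M) : (Fin.snoc ![a] b : Fin 2 → M) = ![a, b] := by
  funext i; fin_cases i <;> simp [Fin.snoc]

lemma realize_liftAt10 (ψ : La.BoundedFormula Empty 1) (v : Empty → M) (xs : Fin 2 → M) :
    (ψ.liftAt 1 0).Realize v xs ↔ ψ.Realize v ![xs 1] := by
  rw [BoundedFormula.realize_liftAt (by norm_num)]
  have e : (xs ∘ fun i : Fin 1 => if (i : ℕ) < 0 then Fin.castAdd 1 i else Fin.addNat i 1)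
      = ![xs 1] := by
    funext i; fin_cases i; simp
  rw [e]

lemma realize_wbF (v : Empty → M) (xs : Fin 1 → M) :
    (wbF (vr 0)).Realize v xs ↔
      (leM (numM M 0) (xs 0) ∧ ∀ y : M, leM y (xs 0) → y ≠ xs 0 →
        leM (Structure.funMap (L := La) AFunc.succ ![y]) (xs 0)) := by
  rw [wbF, BoundedFormula.realize_inf, realize_leF]
  have e0 : Term.realize (Sum.elim v xs) (zeroT : La.Term (Empty ⊕ Fin 1)) = numM M 0 :=
    realize_num _ 0
  have e0' : Term.realize (Sum.elim v xs) (vr 0 : La.Term (Empty ⊕ Fin 1)) = xs 0 := rfl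
  rw [e0, e0']
  constructor
  · rintro ⟨h1, h2⟩
    refine ⟨h1, ?_⟩
    intro y hy hne
    rw [BoundedFormula.realize_all] at h2
    have h := h2 y
    rw [BoundedFormula.realize_imp, ltF, BoundedFormula.realize_inf, realize_leF,
      BoundedFormula.realize_not, BoundedFormula.realize_bdEqual, realize_leF] at h
    have e1 : Term.realize (Sum.elim v (Fin.snoc xs y)) ((Term.var (Sum.inr (Fin.last 1))) : La.Term (Empty ⊕ Fin 2)) = y := by
      exact Fin.snoc_last (α := fun _ => M) (p := xs) (x := y)
    have e2 : Term.realize (Sum.elim v (Fin.snoc xs y)) (liftT (vr 0)) = xs 0 := by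
      rw [realize_liftT]; rfl
    rw [e1, e2] at h
    have e3 : Term.realize (Sum.elim v (Fin.snoc xs y))
        (succT (Term.var (Sum.inr (Fin.last 1))) : La.Term (Empty ⊕ Fin 2))
        = Structure.funMap (L := La) AFunc.succ ![y] := by
      simp only [succT, Term.realize]
      congr 1
      funext i; fin_cases i; simpa using e1
    have h' := h ⟨hy, hne⟩
    rw [e3] at h'
    exact h'
  · rintro ⟨h1, h2⟩
    refine ⟨h1, ?_⟩
    rw [BoundedFormula.realize_all]
    intro y
    rw [BoundedFormula.realize_imp, ltF, BoundedFormula.realize_inf, realize_leF,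
      BoundedFormula.realize_not, BoundedFormula.realize_bdEqual, realize_leF]
    have e1 : Term.realize (Sum.elim v (Fin.snoc xs y)) ((Term.var (Sum.inr (Fin.last 1))) : La.Term (Empty ⊕ Fin 2)) = y := by
      exact Fin.snoc_last (α := fun _ => M) (p := xs) (x := y)
    have e2 : Term.realize (Sum.elim v (Fin.snoc xs y)) (liftT (vr 0)) = xs 0 := by
      rw [realize_liftT]; rfl
    rw [e1, e2]
    rintro ⟨hy, hne⟩
    have e3 : Term.realize (Sum.elim v (Fin.snoc xs y))
        (succT (Term.var (Sum.inr (Fin.last 1))) : La.Term (Empty ⊕ Fin 2))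
        = Structure.funMap (L := La) AFunc.succ ![y] := by
      simp only [succT, Term.realize]
      congr 1
      funext i; fin_cases i; simpa using e1
    have h' := h2 y hy hne
    rw [e3]
    exact h'

lemma wbF_nat (w : Empty → ℕ) (m : ℕ) : (wbF (vr 0)).Realize w ![m] := by
  rw [realize_wbF]
  constructor
  · show leM (numM ℕ 0) m
    rw [numM_nat, leM_nat]; omega
  · intro y hy hne
    have hm : (![m] : Fin 1 → ℕ) 0 = m := rfl
    rw [hm] at hy hne
    rw [leM_nat] at hy
    show leM (y + 1) (![m] 0)
    rw [hm, leM_nat]; omega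

lemma dichotomy (hM : ∀ φ ∈ R0, M ⊨ φ) (b : M) (h0 : leM (numM M 0) b)
    (hs : ∀ y : M, leM y b → y ≠ b → leM (Structure.funMap (L := La) AFunc.succ ![y]) b) :
    ∀ n : ℕ, (∃ i < n, b = numM M i) ∨ leM (numM M n) b := by
  intro n
  induction n with
  | zero => exact Or.inr h0
  | succ n ih =>
      rcases ih with ⟨i, hi, hb⟩ | hle
      · exact Or.inl ⟨i, Nat.lt_succ_of_lt hi, hb⟩
      · by_cases hb : b = numM M n
        · exact Or.inl ⟨n, Nat.lt_succ_self n, hb⟩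
        · exact Or.inr (hs (numM M n) hle (fun h => hb h.symm))

lemma delta0_abs1 (hM : ∀ φ ∈ R0, M ⊨ φ) {δ : La.BoundedFormula Empty 1} (h : IsDelta0 δ)
    (k : ℕ) (v : Empty → M) (w : Empty → ℕ) :
    (δ.Realize v ![numM M k] ↔ δ.Realize w ![k]) := by
  have H := delta0_abs hM h w ![k]
  have e1 : (fun a : Empty => numM M (w a)) = v := funext fun e => e.elim
  have e2 : (fun i : Fin 1 => numM M (![k] i)) = ![numM M k] := by
    funext i; fin_cases i; rfl
  rw [e1, e2] at H
  exact H

end Helpers5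
lemma realize_congr_empty {N : Type*} [La.Structure N] {n : ℕ} (φ : La.BoundedFormula Empty n)
    (w w' : Empty → N) (xs : Fin n → N) : φ.Realize w xs ↔ φ.Realize w' xs := by
  rw [show w = w' from funext fun e => e.elim]

/-- let `σ = ∃x σ₀(x)` and `σ' = ∃y (wb(y) ∧ θ(y))` be 1-Σ₁ sentences,
`σ'` well-behaved. (a) If `ℕ ⊨ σ ≤ σ'` then `R₀ ⊢ ¬(σ' < σ)`;
(b) if `ℕ ⊨ σ < σ'` then `R₀ ⊢ ¬(σ' ≤ σ)`. -/
theorem statement13 (σ₀ θ : La.BoundedFormula Empty 1)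
    (h1 : IsDelta0 σ₀) (h2 : IsDelta0 θ) :
    ((ℕ ⊨ wcLe σ₀ (wbF (vr 0) ⊓ θ)) → R0 ⊨ᵇ (∼(wcLt (wbF (vr 0) ⊓ θ) σ₀) : La.Sentence)) ∧
    ((ℕ ⊨ wcLt σ₀ (wbF (vr 0) ⊓ θ)) → R0 ⊨ᵇ (∼(wcLe (wbF (vr 0) ⊓ θ) σ₀) : La.Sentence)) := by
  constructor
  · -- part (a)
    intro hN Mod v xs
    have hM : ∀ φ ∈ R0, (Mod : Type _) ⊨ φ := fun φ h => Mod.is_model.realize_of_mem φ h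
    rw [BoundedFormula.realize_not]
    intro hcon
    -- unpack ℕ hypothesis
    rw [wcLe, Sentence.Realize, Formula.Realize, BoundedFormula.realize_ex] at hN
    obtain ⟨a, ha⟩ := hN
    rw [snoc_zero, BoundedFormula.realize_inf] at ha
    obtain ⟨ha1, ha2⟩ := ha
    rw [BoundedFormula.realize_all] at ha2
    -- unpack M hypothesis
    rw [wcLt, BoundedFormula.realize_ex] at hcon
    obtain ⟨b, hb⟩ := hcon
    rw [snoc_zero, BoundedFormula.realize_inf] at hb
    obtain ⟨hb1, hb2⟩ := hb
    rw [BoundedFormula.realize_inf] at hb1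
    obtain ⟨hwb, hθb⟩ := hb1
    rw [realize_wbF] at hwb
    have hm0 : (![b] : Fin 1 → Mod) 0 = b := rfl
    rw [hm0] at hwb
    rw [BoundedFormula.realize_all] at hb2
    rcases dichotomy hM b hwb.1 hwb.2 a with ⟨i, hia, hbeq⟩ | hle
    · -- b is a small numeral: θ(i) holds in ℕ, contradiction
      rw [hbeq] at hθb
      have hθi : θ.Realize (fun e : Empty => e.elim : Empty → ℕ) ![i] :=
        (delta0_abs1 hM h2 i v _).mp hθb
      have hN2 := ha2 i
      rw [snoc_one, BoundedFormula.realize_imp, ltF, BoundedFormula.realize_inf, realize_leF,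
        BoundedFormula.realize_not, BoundedFormula.realize_bdEqual,
        BoundedFormula.realize_not] at hN2
      have hcontra := hN2 ⟨(leM_nat i a).mpr (Nat.le_of_lt hia),
        fun hh => Nat.ne_of_lt hia hh⟩
      rw [realize_liftAt10, BoundedFormula.realize_inf] at hcontra
      exact hcontra ⟨wbF_nat _ i, (realize_congr_empty θ _ _ _).mp hθi⟩
    · -- numM a ≤ b: σ₀ holds at numM a in M, contradiction with hb2
      have hb2a := hb2 (numM Mod a)
      rw [snoc_one, BoundedFormula.realize_imp, realize_leF, BoundedFormula.realize_not] at hb2a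
      have hσM : σ₀.Realize v ![numM Mod a] :=
        (delta0_abs1 hM h1 a v (fun e : Empty => e.elim)).mpr
          ((realize_congr_empty σ₀ _ _ _).mp ha1)
      have hcontra := hb2a hle
      rw [realize_liftAt10] at hcontra
      exact hcontra hσM
  · -- part (b)
    intro hN Mod v xs
    have hM : ∀ φ ∈ R0, (Mod : Type _) ⊨ φ := fun φ h => Mod.is_model.realize_of_mem φ h
    rw [BoundedFormula.realize_not]
    intro hcon
    rw [wcLt, Sentence.Realize, Formula.Realize, BoundedFormula.realize_ex] at hN
    obtain ⟨a, ha⟩ := hN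
    rw [snoc_zero, BoundedFormula.realize_inf] at ha
    obtain ⟨ha1, ha2⟩ := ha
    rw [BoundedFormula.realize_all] at ha2
    rw [wcLe, BoundedFormula.realize_ex] at hcon
    obtain ⟨b, hb⟩ := hcon
    rw [snoc_zero, BoundedFormula.realize_inf] at hb
    obtain ⟨hb1, hb2⟩ := hb
    rw [BoundedFormula.realize_inf] at hb1
    obtain ⟨hwb, hθb⟩ := hb1
    rw [realize_wbF] at hwb
    have hm0 : (![b] : Fin 1 → Mod) 0 = b := rfl
    rw [hm0] at hwb
    rw [BoundedFormula.realize_all] at hb2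
    rcases dichotomy hM b hwb.1 hwb.2 a with ⟨i, hia, hbeq⟩ | hle
    · -- b = numM i with i < a: θ(i) in ℕ contradicts ha2 at i
      rw [hbeq] at hθb
      have hθi : θ.Realize (fun e : Empty => e.elim : Empty → ℕ) ![i] :=
        (delta0_abs1 hM h2 i v _).mp hθb
      have hN2 := ha2 i
      rw [snoc_one, BoundedFormula.realize_imp, realize_leF,
        BoundedFormula.realize_not] at hN2
      have hcontra := hN2 ((leM_nat i a).mpr (Nat.le_of_lt hia))
      rw [realize_liftAt10, BoundedFormula.realize_inf] at hcontra
      exact hcontra ⟨wbF_nat _ i, (realize_congr_empty θ _ _ _).mp hθi⟩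
    · by_cases hba : b = numM Mod a
      · -- θ(a) in ℕ contradicts ha2 at a
        rw [hba] at hθb
        have hθa : θ.Realize (fun e : Empty => e.elim : Empty → ℕ) ![a] :=
          (delta0_abs1 hM h2 a v _).mp hθb
        have hN2 := ha2 a
        rw [snoc_one, BoundedFormula.realize_imp, realize_leF,
          BoundedFormula.realize_not] at hN2
        have hcontra := hN2 ((leM_nat a a).mpr (le_refl a))
        rw [realize_liftAt10, BoundedFormula.realize_inf] at hcontra
        exact hcontra ⟨wbF_nat _ a, (realize_congr_empty θ _ _ _).mp hθa⟩
      · -- numM a < b: use hb2 at numM a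
        have hb2a := hb2 (numM Mod a)
        rw [snoc_one, BoundedFormula.realize_imp, ltF, BoundedFormula.realize_inf, realize_leF,
          BoundedFormula.realize_not, BoundedFormula.realize_bdEqual,
          BoundedFormula.realize_not] at hb2a
        have hσM : σ₀.Realize v ![numM Mod a] :=
          (delta0_abs1 hM h1 a v (fun e : Empty => e.elim)).mpr
            ((realize_congr_empty σ₀ _ _ _).mp ha1)
        have hcontra := hb2a ⟨hle, fun hh => hba hh.symm⟩
        rw [realize_liftAt10] at hcontra
        exact hcontra hσM
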